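/- Let ζ ∈ ℝᵖ, λ, ω > 0, ϑ > 0, γϑ > 1. With p_γ the MCP as above, if ‖ζ‖ ≤ γλω and ‖ζ‖ > λω/ϑ, then the minimizer of g(δ) = (ϑ/2)‖ζ − δ‖² + p_γ(‖δ‖, λω) over the set {δ : ‖δ‖ ≤ γλω} is δ* = S(ζ, λω/ϑ)/(1 − 1/(γϑ)), where S(z, t) = (1 − t/‖z‖)₊ z. -/

import Mathlib

/-- Closed-form MCP penalty: `p_γ(t, μ) = μt − t²/(2γ)` for `t ≤ γμ` and `γμ²/2` otherwise. -/
noncomputable def mcpClosed (γ μ t : ℝ) : ℝ :=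
  if t ≤ γ * μ then μ * t - t ^ 2 / (2 * γ) else γ * μ ^ 2 / 2

/-- Groupwise soft-thresholding operator `S(z, t) = (1 - t/‖z‖)₊ • z` (with `S(0,t) = 0`). -/
noncomputable def softThresh {p : ℕ} (z : EuclideanSpace ℝ (Fin p)) (t : ℝ) :
    EuclideanSpace ℝ (Fin p) :=
  max (1 - t / ‖z‖) 0 • z

/-! On the ball `‖δ‖ ≤ γμ` the objective only sees `δ` through `‖ζ - δ‖` and `‖δ‖`, and the reverse
triangle inequality `|‖ζ‖ - ‖δ‖| ≤ ‖ζ - δ‖`, an equality along the ray through `ζ`, reduces it to the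
one-variable quadratic `s ↦ ϑ/2 (‖ζ‖ - s)² + μ s - s²/(2γ)`. Its leading coefficient `(ϑ - 1/γ)/2` is
positive because `γϑ > 1`, so it is minimised at its stationary point, which is the norm of
`S(ζ, μ/ϑ)/(1 - 1/(γϑ))`; the hypothesis `‖ζ‖ ≤ γμ` keeps that point inside the ball. -/

lemma mcpClosed_of_le {γ μ t : ℝ} (h : t ≤ γ * μ) :
    mcpClosed γ μ t = μ * t - t ^ 2 / (2 * γ) :=
  if_pos h

lemma mcp_quadratic_le_of_stationary {r s s₀ μ ϑ γ : ℝ} (hconv : 1 / γ ≤ ϑ)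
    (hs₀ : (ϑ - 1 / γ) * s₀ = ϑ * r - μ) :
    ϑ / 2 * (r - s₀) ^ 2 + (μ * s₀ - s₀ ^ 2 / (2 * γ)) ≤
      ϑ / 2 * (r - s) ^ 2 + (μ * s - s ^ 2 / (2 * γ)) := by
  have hgap : ϑ / 2 * (r - s) ^ 2 + (μ * s - s ^ 2 / (2 * γ)) -
      (ϑ / 2 * (r - s₀) ^ 2 + (μ * s₀ - s₀ ^ 2 / (2 * γ))) =
        (ϑ - 1 / γ) / 2 * (s - s₀) ^ 2 + ((ϑ - 1 / γ) * s₀ - (ϑ * r - μ)) * (s - s₀) := by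
    ring
  rw [hs₀, sub_self, zero_mul, add_zero] at hgap
  nlinarith [mul_nonneg (sub_nonneg.2 hconv) (sq_nonneg (s - s₀))]

lemma sq_norm_sub_norm_le_sq_norm_sub {E : Type*} [SeminormedAddCommGroup E] (z δ : E) :
    (‖z‖ - ‖δ‖) ^ 2 ≤ ‖z - δ‖ ^ 2 :=
  sq_le_sq.2 (by simpa using abs_norm_sub_norm_le z δ)

lemma sq_norm_sub_smul_self {E : Type*} [SeminormedAddCommGroup E] [NormedSpace ℝ E]
    {c : ℝ} (hc : 0 ≤ c) (z : E) : ‖z - c • z‖ ^ 2 = (‖z‖ - ‖c • z‖) ^ 2 := by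
  rw [show z - c • z = (1 - c) • z by rw [sub_smul, one_smul], norm_smul, norm_smul, Real.norm_eq_abs, Real.norm_eq_abs,
    abs_of_nonneg hc, mul_pow, sq_abs]
  ring

lemma norm_softThresh {p : ℕ} (z : EuclideanSpace ℝ (Fin p)) {t : ℝ} (ht : 0 ≤ t) :
    ‖softThresh z t‖ = max (‖z‖ - t) 0 := by
  rcases (norm_nonneg z).eq_or_lt with hz | hz
  · simp [softThresh, ← hz, ht]
  · rw [softThresh, norm_smul, Real.norm_of_nonneg (le_max_right _ _), max_mul_of_nonneg _ _ hz.le,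
      sub_mul, div_mul_cancel₀ _ hz.ne', one_mul, zero_mul]

lemma sq_norm_sub_smul_softThresh {p : ℕ} (z : EuclideanSpace ℝ (Fin p)) (t : ℝ) {a : ℝ}
    (ha : 0 ≤ a) : ‖z - a • softThresh z t‖ ^ 2 = (‖z‖ - ‖a • softThresh z t‖) ^ 2 := by
  rw [softThresh, smul_smul]
  exact sq_norm_sub_smul_self (mul_nonneg ha (le_max_right _ _)) z

theorem stmt_10 {p : ℕ} (ζ : EuclideanSpace ℝ (Fin p)) (lam ω ϑ γ : ℝ)
    (hlam : 0 < lam) (hω : 0 < ω) (hϑ : 0 < ϑ) (hγϑ : 1 < γ * ϑ)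
    (hζle : ‖ζ‖ ≤ γ * lam * ω) (hζgt : lam * ω / ϑ < ‖ζ‖) :
    let δstar : EuclideanSpace ℝ (Fin p) :=
      (1 - 1 / (γ * ϑ))⁻¹ • softThresh ζ (lam * ω / ϑ)
    ‖δstar‖ ≤ γ * lam * ω ∧
      ∀ δ : EuclideanSpace ℝ (Fin p), ‖δ‖ ≤ γ * lam * ω →
        ϑ / 2 * ‖ζ - δstar‖ ^ 2 + mcpClosed γ (lam * ω) ‖δstar‖ ≤
          ϑ / 2 * ‖ζ - δ‖ ^ 2 + mcpClosed γ (lam * ω) ‖δ‖ := by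
  intro δstar
  have hγ : 0 < γ := by nlinarith
  have hscale : 0 < 1 - 1 / (γ * ϑ) := by
    rw [sub_pos, div_lt_one (by positivity)]
    exact hγϑ
  have hconv : 1 / γ < ϑ := by
    rw [div_lt_iff₀ hγ]
    linarith
  have hnorm : ‖δstar‖ = (1 - 1 / (γ * ϑ))⁻¹ * (‖ζ‖ - lam * ω / ϑ) := by
    rw [norm_smul, norm_softThresh ζ (by positivity), max_eq_left (by linarith),
      Real.norm_of_nonneg (inv_nonneg.2 hscale.le)]
  have hstat : (ϑ - 1 / γ) * ‖δstar‖ = ϑ * ‖ζ‖ - lam * ω := by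
    have : ϑ * γ - 1 ≠ 0 := by nlinarith
    rw [hnorm]
    field_simp
  have hball : ‖δstar‖ ≤ γ * lam * ω := by
    refine le_of_mul_le_mul_left ?_ (sub_pos.2 hconv)
    rw [hstat, show (ϑ - 1 / γ) * (γ * lam * ω) = ϑ * (γ * lam * ω) - lam * ω by field_simp]
    nlinarith
  refine ⟨hball, fun δ hδ => ?_⟩
  rw [mcpClosed_of_le (by linarith), mcpClosed_of_le (by linarith),
    sq_norm_sub_smul_softThresh ζ _ (inv_nonneg.2 hscale.le)]
  calc _ ≤ ϑ / 2 * (‖ζ‖ - ‖δ‖) ^ 2 + (lam * ω * ‖δ‖ - ‖δ‖ ^ 2 / (2 * γ)) :=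
        mcp_quadratic_le_of_stationary hconv.le hstat
    _ ≤ _ := by gcongr ϑ / 2 * ?_ + _; exact sq_norm_sub_norm_le_sq_norm_sub ζ δ
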